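/- arXiv:math/0301203 — 8 statements merged into one kernel-verified Lean document; each statement's English description precedes it below -/
import Mathlib

section
/- For any positive integer n and commutative ring elements (or field elements) x_1,...,x_n that are invertible, the n×n determinant det(x_h^{t-1/2} + x_h^{1/2-t})_{1≤h,t≤n} (interpreted after choosing square roots y_h with y_h^2 = x_h, i.e. det(y_h^{2t-1} + y_h^{1-2t})) equals (x_1x_2···x_n)^{-n+1/2} · ∏_{1≤h<t≤n}(x_h-x_t)(1-x_h x_t) · ∏_{h=1}^n (x_h+1), i.e. det(y_h^{2t-1}+y_h^{1-2t})_{1≤h,t≤n} = (y_1···y_n)^{-2n+1} ∏_{1≤h<t≤n}(y_h^2-y_t^2)(1-y_h^2y_t^2) ∏_{h=1}^n (y_h^2+1). -/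
/-!
With `u = y + y⁻¹`, each entry `y ^ (2t+1) + y ^ -(2t+1)` is `u * Q_t (u ^ 2)` for a monic
polynomial `Q_t` of degree `t`, so the determinant is `∏ u_h` times the Vandermonde determinant
of the `u_h ^ 2`. It remains to expand `u_h = (y_h ^ 2 + 1) / y_h` and
`u_t ^ 2 - u_h ^ 2 = (y_h ^ 2 - y_t ^ 2) * (1 - y_h ^ 2 * y_t ^ 2) / (y_h * y_t) ^ 2`.
-/

open Polynomial Finset

/-- The polynomial `Q` with `(x + w) * Q ((x + w) ^ 2) = x ^ (2 * t + 1) + w ^ (2 * t + 1)`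
whenever `x * w = 1`; the recursion comes from `x ^ 2 + w ^ 2 = (x + w) ^ 2 - 2`. -/
noncomputable def oddPowerSumPoly (R : Type*) [CommRing R] : ℕ → R[X]
  | 0 => 1
  | 1 => X - C 3
  | t + 2 => (X - C 2) * oddPowerSumPoly R (t + 1) - oddPowerSumPoly R t

section

variable {R : Type*} [CommRing R]

theorem oddPowerSumPoly_monic_and_natDegree [Nontrivial R] :
    ∀ t, (oddPowerSumPoly R t).Monic ∧ (oddPowerSumPoly R t).natDegree = t
  | 0 => ⟨monic_one, natDegree_one⟩
  | 1 => ⟨monic_X_sub_C 3, natDegree_X_sub_C 3⟩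
  | t + 2 => by
    obtain ⟨hm₀, hd₀⟩ := oddPowerSumPoly_monic_and_natDegree t
    obtain ⟨hm₁, hd₁⟩ := oddPowerSumPoly_monic_and_natDegree (t + 1)
    have hm : ((X - C (2 : R)) * oddPowerSumPoly R (t + 1)).Monic := (monic_X_sub_C 2).mul hm₁
    have hd : ((X - C (2 : R)) * oddPowerSumPoly R (t + 1)).natDegree = t + 2 := by
      rw [(monic_X_sub_C 2).natDegree_mul hm₁, natDegree_X_sub_C, hd₁]; ring
    have hlt : (oddPowerSumPoly R t).natDegree <
        ((X - C (2 : R)) * oddPowerSumPoly R (t + 1)).natDegree := by omega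
    exact ⟨hm.sub_of_left (degree_lt_degree hlt), by
      rw [oddPowerSumPoly, natDegree_sub_eq_left_of_natDegree_lt hlt, hd]⟩

theorem mul_eval_oddPowerSumPoly {x w : R} (hxw : x * w = 1) :
    ∀ t, (x + w) * (oddPowerSumPoly R t).eval ((x + w) ^ 2) = x ^ (2 * t + 1) + w ^ (2 * t + 1)
  | 0 => by simp [oddPowerSumPoly]
  | 1 => by
    simp only [oddPowerSumPoly, eval_sub, eval_X, eval_C]
    linear_combination (3 * (x + w)) * hxw
  | t + 2 => by
    have ih₀ := mul_eval_oddPowerSumPoly hxw t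
    have ih₁ := mul_eval_oddPowerSumPoly hxw (t + 1)
    simp only [oddPowerSumPoly, eval_sub, eval_mul, eval_X, eval_C]
    linear_combination ((x + w) ^ 2 - 2) * ih₁ - ih₀
      + ((x * w + 1) * (x ^ (2 * t + 1) + w ^ (2 * t + 1))
        + 2 * (x ^ (2 * t + 3) + w ^ (2 * t + 3))) * hxw

theorem det_pow_add_pow_eq_prod_mul_prod [Nontrivial R] {n : ℕ} {x w : Fin n → R}
    (hxw : ∀ h, x h * w h = 1) :
    (Matrix.of fun h t : Fin n => x h ^ (2 * (t : ℕ) + 1) + w h ^ (2 * (t : ℕ) + 1)).det =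
      (∏ h, (x h + w h)) *
        ∏ h : Fin n, ∏ t ∈ Ioi h, ((x t + w t) ^ 2 - (x h + w h) ^ 2) := by
  have hentries :
      (Matrix.of fun h t : Fin n => x h ^ (2 * (t : ℕ) + 1) + w h ^ (2 * (t : ℕ) + 1)) =
      Matrix.of fun h t : Fin n =>
        (x h + w h) * (oddPowerSumPoly R t).eval ((x h + w h) ^ 2) := by
    ext h t
    exact (mul_eval_oddPowerSumPoly (hxw h) t).symm
  have hvandermonde : Matrix.det (fun h t : Fin n => (oddPowerSumPoly R t).eval ((x h + w h) ^ 2)) =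
      (Matrix.vandermonde fun h => (x h + w h) ^ 2).det :=
    (Matrix.det_eval_matrixOfPolynomials_eq_det_vandermonde _ (fun t : Fin n => oddPowerSumPoly R t)
      (fun t => (oddPowerSumPoly_monic_and_natDegree t).2)
      (fun t => (oddPowerSumPoly_monic_and_natDegree t).1)).symm
  rw [hentries, Matrix.det_mul_column (fun h => x h + w h)
    (fun h t : Fin n => (oddPowerSumPoly R t).eval ((x h + w h) ^ 2)), hvandermonde,
    Matrix.det_vandermonde]

end

theorem Fin.prod_prod_Iio_mul_mul_prod_eq_pow {M : Type*} [CommMonoid M] {n : ℕ}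
    (g : Fin n → M) :
    (∏ t, ∏ h ∈ Iio t, g h * g t) * ∏ h, g h = (∏ h, g h) ^ n := by
  have hleft : ∏ t, ∏ h ∈ Iio t, g h = ∏ h, g h ^ (n - 1 - h) := by
    rw [prod_comm' (s' := fun h => Ioi h) (t' := univ) (by simp)]
    simp only [Finset.prod_const, Fin.card_Ioi]
  simp only [prod_mul_distrib, Finset.prod_const, Fin.card_Iio]
  rw [hleft, ← prod_mul_distrib, ← prod_mul_distrib, ← prod_pow]
  exact prod_congr rfl fun h _ => by rw [← pow_add, ← pow_succ]; congr 1; omega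

theorem Fin.prod_prod_Iio_mul_eq_zpow {G : Type*} [CommGroupWithZero G] {n : ℕ}
    {g : Fin n → G} (hg : ∀ h, g h ≠ 0) :
    ∏ t, ∏ h ∈ Iio t, g h * g t = (∏ h, g h) ^ ((n : ℤ) - 1) := by
  have hprod : ∏ h, g h ≠ 0 := prod_ne_zero_iff.mpr fun h _ => hg h
  rw [zpow_sub_one₀ hprod, zpow_natCast, ← Fin.prod_prod_Iio_mul_mul_prod_eq_pow,
    mul_inv_cancel_right₀ hprod]

theorem sq_add_inv_sub_sq_add_inv {K : Type*} [Field K] {a b : K} (ha : a ≠ 0) (hb : b ≠ 0) :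
    (b + b⁻¹) ^ 2 - (a + a⁻¹) ^ 2 =
      (a ^ 2 - b ^ 2) * (1 - a ^ 2 * b ^ 2) * (a⁻¹ ^ 2 * b⁻¹ ^ 2) := by
  field_simp
  ring

theorem stmt_0_general {F : Type*} [Field F] (n : ℕ) (y : Fin n → F)
    (hy : ∀ h, y h ≠ 0) :
    Matrix.det (Matrix.of fun h t : Fin n =>
        y h ^ ((2 * (t : ℕ) + 1 : ℤ)) + y h ^ (-(2 * (t : ℕ) + 1 : ℤ))) =
      (∏ h, y h) ^ ((1 - 2 * (n : ℤ))) *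
        (∏ t : Fin n, ∏ h ∈ Finset.Iio t,
          ((y h ^ 2 - y t ^ 2) * (1 - y h ^ 2 * y t ^ 2))) *
        ∏ h, (y h ^ 2 + 1) := by
  have hentries : (Matrix.of fun h t : Fin n =>
      y h ^ ((2 * (t : ℕ) + 1 : ℤ)) + y h ^ (-(2 * (t : ℕ) + 1 : ℤ))) =
      Matrix.of fun h t : Fin n =>
        y h ^ (2 * (t : ℕ) + 1) + (y h)⁻¹ ^ (2 * (t : ℕ) + 1) := by
    ext h t
    simp only [Matrix.of_apply, zpow_neg, ← inv_zpow]
    norm_cast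
  have hsum (h : Fin n) : y h + (y h)⁻¹ = (y h ^ 2 + 1) * (y h)⁻¹ := by
    rw [add_mul, sq, mul_self_mul_inv, one_mul]
  have hpairs : ∏ h : Fin n, ∏ t ∈ Ioi h, ((y t + (y t)⁻¹) ^ 2 - (y h + (y h)⁻¹) ^ 2) =
      (∏ t : Fin n, ∏ h ∈ Iio t, ((y h ^ 2 - y t ^ 2) * (1 - y h ^ 2 * y t ^ 2))) *
        (∏ h, (y h)⁻¹ ^ 2) ^ ((n : ℤ) - 1) := by
    rw [prod_comm' (s' := fun t => Iio t) (t' := univ) (by simp),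
      ← Fin.prod_prod_Iio_mul_eq_zpow (g := fun h => (y h)⁻¹ ^ 2) (fun h => by simp [hy h]),
      ← prod_mul_distrib]
    refine prod_congr rfl fun t _ => ?_
    rw [← prod_mul_distrib]
    exact prod_congr rfl fun h _ => sq_add_inv_sub_sq_add_inv (hy h) (hy t)
  have hprod : ∏ h, y h ≠ 0 := prod_ne_zero_iff.mpr fun h _ => hy h
  have hpow : (∏ h, y h)⁻¹ * (∏ h, (y h)⁻¹ ^ 2) ^ ((n : ℤ) - 1) =
      (∏ h, y h) ^ (1 - 2 * (n : ℤ)) := by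
    rw [prod_pow, prod_inv_distrib, ← zpow_natCast, ← zpow_mul, ← zpow_neg_one, ← zpow_mul,
      ← zpow_add₀ hprod]
    congr 1
    ring
  rw [hentries, det_pow_add_pow_eq_prod_mul_prod fun h => mul_inv_cancel₀ (hy h), hpairs,
    prod_congr rfl fun h _ => hsum h, prod_mul_distrib, prod_inv_distrib, ← hpow]
  ring

/-- Equation (ortho1): even-orthogonal-type Vandermonde determinant evaluation. -/
theorem stmt_0 {F : Type*} [Field F] (n : ℕ) (hn : 0 < n) (y : Fin n → F)
    (hy : ∀ h, y h ≠ 0) :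
    Matrix.det (Matrix.of fun h t : Fin n =>
        y h ^ ((2 * (t : ℕ) + 1 : ℤ)) + y h ^ (-(2 * (t : ℕ) + 1 : ℤ))) =
      (∏ h, y h) ^ ((1 - 2 * (n : ℤ))) *
        (∏ t : Fin n, ∏ h ∈ Finset.Iio t,
          ((y h ^ 2 - y t ^ 2) * (1 - y h ^ 2 * y t ^ 2))) *
        ∏ h, (y h ^ 2 + 1) :=
  stmt_0_general n y hy
end

section
/- For any positive integer n and nonzero field elements y_1,...,y_n, the n×n determinant det(y_h^{2t-1} - y_h^{1-2t})_{1≤h,t≤n} equals (y_1···y_n)^{-2n+1} · ∏_{1≤h<t≤n}(y_h^2 - y_t^2)(1 - y_h^2 y_t^2) · ∏_{h=1}^n (y_h^2 - 1). -/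
/-!
Pulling `y_h - y_h⁻¹` out of row `h` leaves the entry `W_t(w_h)` with `w_h = y_h² + y_h⁻²`,
where `W_t` is monic of degree `t`; so the determinant is `∏ (y_h - y_h⁻¹)` times the
Vandermonde determinant of the `w_h`. Each difference `w_t - w_h` equals
`(y_h² - y_t²)(1 - y_h² y_t²) / (y_h y_t)²`, and every `y_h` occurs in `n - 1` of the pairs,
which with the `y_h⁻¹` from `y_h - y_h⁻¹ = (y_h² - 1) / y_h` gives the power `1 - 2n` of `∏ y_h`.
-/

open Polynomial Finset

/-- Chebyshev polynomials of the fourth kind, rescaled like `Polynomial.Chebyshev.S`: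
`chebyshevW R t (z + z⁻¹) = (z ^ (t + ½) - z ^ (-(t + ½))) / (z ^ ½ - z ^ (-½))`. -/
noncomputable def chebyshevW (R : Type*) [CommRing R] : ℕ → R[X]
  | 0 => 1
  | 1 => X + 1
  | t + 2 => X * chebyshevW R (t + 1) - chebyshevW R t

namespace chebyshevW

theorem monic_and_natDegree (R : Type*) [CommRing R] [Nontrivial R] :
    ∀ t, (chebyshevW R t).Monic ∧ (chebyshevW R t).natDegree = t
  | 0 => ⟨monic_one, natDegree_one⟩
  | 1 => ⟨monic_X_add_C 1, natDegree_X_add_C 1⟩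
  | t + 2 => by
    obtain ⟨hm₀, hd₀⟩ := monic_and_natDegree R t
    obtain ⟨hm₁, hd₁⟩ := monic_and_natDegree R (t + 1)
    have hd : (X * chebyshevW R (t + 1)).natDegree = t + 2 := by
      rw [natDegree_X_mul hm₁.ne_zero, hd₁]
    have hlt : (chebyshevW R t).degree < (X * chebyshevW R (t + 1)).degree := by
      rw [degree_eq_natDegree hm₀.ne_zero, degree_eq_natDegree (monic_X.mul hm₁).ne_zero, hd, hd₀]
      exact_mod_cast (by omega : t < t + 2)
    refine ⟨(monic_X.mul hm₁).sub_of_left hlt, ?_⟩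
    rw [chebyshevW, natDegree_sub_eq_left_of_natDegree_lt (by omega), hd]

theorem mul_eval_sq_add_inv_sq {K : Type*} [Field K] {y : K} (hy : y ≠ 0) :
    ∀ t : ℕ, (y - y⁻¹) * (chebyshevW K t).eval (y ^ 2 + y⁻¹ ^ 2) =
      y ^ (2 * t + 1) - y⁻¹ ^ (2 * t + 1)
  | 0 => by simp [chebyshevW]
  | 1 => by
    simp only [chebyshevW, eval_add, eval_X, eval_one]
    linear_combination (y⁻¹ - y) * mul_inv_cancel₀ hy
  | t + 2 => by
    simp only [chebyshevW, eval_sub, eval_mul, eval_X]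
    rw [mul_sub, mul_left_comm, mul_eval_sq_add_inv_sq hy (t + 1), mul_eval_sq_add_inv_sq hy t]
    linear_combination (y * y⁻¹ + 1) * (y ^ (2 * t + 1) - y⁻¹ ^ (2 * t + 1)) * mul_inv_cancel₀ hy

end chebyshevW

theorem Finset.prod_prod_Ioi_eq_prod_prod_Iio {α M : Type*} [CommMonoid M] [Fintype α]
    [Preorder α] [LocallyFiniteOrderTop α] [LocallyFiniteOrderBot α] (f : α → α → M) :
    ∏ i, ∏ j ∈ Ioi i, f i j = ∏ j, ∏ i ∈ Iio j, f i j :=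
  prod_comm' fun _ _ => by simp only [mem_Ioi, mem_Iio, mem_univ, and_true, true_and]

theorem Fin.prod_prod_Iio_mul_mul_prod_eq_prod_pow {M : Type*} [CommMonoid M] {n : ℕ}
    (y : Fin n → M) : (∏ t, ∏ h ∈ Iio t, (y h * y t)) * ∏ h, y h = (∏ h, y h) ^ n := by
  simp only [prod_mul_distrib]
  rw [← prod_prod_Ioi_eq_prod_prod_Iio (fun h _ => y h), ← prod_pow]
  simp only [Finset.prod_const, Fin.card_Ioi, Fin.card_Iio, ← prod_mul_distrib]
  refine prod_congr rfl fun h _ => ?_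
  rw [← pow_add, ← pow_succ]
  congr 1
  omega

theorem sq_add_inv_sq_sub_sq_add_inv_sq {K : Type*} [Field K] {a b : K} (ha : a ≠ 0)
    (hb : b ≠ 0) :
    (b ^ 2 + b⁻¹ ^ 2) - (a ^ 2 + a⁻¹ ^ 2) = (a ^ 2 - b ^ 2) * (1 - a ^ 2 * b ^ 2) / (a * b) ^ 2 := by
  field_simp
  ring

theorem stmt_1_general {F : Type*} [Field F] (n : ℕ) (y : Fin n → F)
    (hy : ∀ h, y h ≠ 0) :
    Matrix.det (Matrix.of fun h t : Fin n =>
        y h ^ ((2 * (t : ℕ) + 1 : ℤ)) - y h ^ (-(2 * (t : ℕ) + 1 : ℤ))) =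
      (∏ h, y h) ^ ((1 - 2 * (n : ℤ))) *
        (∏ t : Fin n, ∏ h ∈ Finset.Iio t,
          ((y h ^ 2 - y t ^ 2) * (1 - y h ^ 2 * y t ^ 2))) *
        ∏ h, (y h ^ 2 - 1) := by
  have hentry : ∀ h t : Fin n, y h ^ ((2 * (t : ℕ) + 1 : ℤ)) - y h ^ (-(2 * (t : ℕ) + 1 : ℤ)) =
      (y h - (y h)⁻¹) * (chebyshevW F t).eval (y h ^ 2 + (y h)⁻¹ ^ 2) := fun h t => by
    rw [chebyshevW.mul_eval_sq_add_inv_sq (hy h), zpow_neg, ← inv_zpow]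
    norm_cast
  have hrows := Matrix.det_mul_column (fun h => y h - (y h)⁻¹)
    (Matrix.of fun h (t : Fin n) => (chebyshevW F t).eval (y h ^ 2 + (y h)⁻¹ ^ 2))
  simp only [Matrix.of_apply] at hrows
  simp_rw [hentry]
  rw [hrows, ← Matrix.det_eval_matrixOfPolynomials_eq_det_vandermonde _ _
      (fun t => (chebyshevW.monic_and_natDegree F t).2)
      (fun t => (chebyshevW.monic_and_natDegree F t).1),
    Matrix.det_vandermonde, prod_prod_Ioi_eq_prod_prod_Iio]
  simp_rw [fun t (h : Fin n) => sq_add_inv_sq_sub_sq_add_inv_sq (hy h) (hy t)]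
  simp only [prod_div_distrib, prod_pow]
  set P := ∏ h, y h
  set Q := ∏ t : Fin n, ∏ h ∈ Iio t, (y h * y t)
  have hP : P ≠ 0 := prod_ne_zero_iff.mpr fun h _ => hy h
  have hQ : Q * P = P ^ n := Fin.prod_prod_Iio_mul_mul_prod_eq_prod_pow y
  have hdiag : ∏ h, (y h - (y h)⁻¹) = (∏ h, (y h ^ 2 - 1)) * P⁻¹ := by
    rw [← prod_inv_distrib, ← prod_mul_distrib]
    exact prod_congr rfl fun h _ => by field_simp [hy h]
  have hpow : P ^ (1 - 2 * (n : ℤ)) = (P * Q ^ 2)⁻¹ := by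
    rw [zpow_sub₀ hP, zpow_one, mul_comm, zpow_mul, zpow_natCast, ← hQ, zpow_two]
    field_simp
  rw [hdiag, hpow]
  field_simp

/-- Equation (ortho2): odd-orthogonal-type Vandermonde determinant evaluation. -/
theorem stmt_1 {F : Type*} [Field F] (n : ℕ) (hn : 0 < n) (y : Fin n → F)
    (hy : ∀ h, y h ≠ 0) :
    Matrix.det (Matrix.of fun h t : Fin n =>
        y h ^ ((2 * (t : ℕ) + 1 : ℤ)) - y h ^ (-(2 * (t : ℕ) + 1 : ℤ))) =
      (∏ h, y h) ^ ((1 - 2 * (n : ℤ))) *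
        (∏ t : Fin n, ∏ h ∈ Finset.Iio t,
          ((y h ^ 2 - y t ^ 2) * (1 - y h ^ 2 * y t ^ 2))) *
        ∏ h, (y h ^ 2 - 1) :=
  stmt_1_general n y hy
end

section
/- For any positive integer n ≥ 1 and nonzero field elements x_1,...,x_n, the n×n determinant det(x_h^{t-1} + x_h^{-(t-1)})_{1≤h,t≤n} equals 2 · (x_1···x_n)^{-n+1} · ∏_{1≤h<t≤n}(x_h - x_t)(1 - x_h x_t). -/
open Polynomial Finset

/-- Chebyshev-like polynomials: `q t` evaluated at `x + x⁻¹` gives `x^t + x⁻ᵗ`. -/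
noncomputable def qpoly (F : Type*) [Field F] : ℕ → F[X]
  | 0 => Polynomial.C 2
  | 1 => Polynomial.X
  | (t + 2) => Polynomial.X * qpoly F (t + 1) - qpoly F t

lemma qpoly_deg_coeff (F : Type*) [Field F] (t : ℕ) :
    (qpoly F t).natDegree ≤ t ∧ (qpoly F t).coeff t = (if t = 0 then 2 else 1) := by
  induction t using Nat.twoStepInduction with
  | zero => simp [qpoly]
  | one => simp [qpoly]
  | more t ih1 ih2 =>
    obtain ⟨hd1, hc1⟩ := ih1
    obtain ⟨hd2, hc2⟩ := ih2
    constructor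
    · rw [qpoly]
      refine le_trans (natDegree_sub_le _ _) (max_le ?_ (le_trans hd1 (by omega)))
      refine le_trans (natDegree_mul_le) ?_
      simp only [natDegree_X]
      omega
    · rw [qpoly]
      rw [coeff_sub, coeff_X_mul]
      rw [coeff_eq_zero_of_natDegree_lt (lt_of_le_of_lt hd1 (by omega))]
      rw [hc2]; simp

lemma qpoly_eval {F : Type*} [Field F] (x : F) (hx : x ≠ 0) (t : ℕ) :
    (qpoly F t).eval (x + x⁻¹) = x ^ t + x⁻¹ ^ t := by
  induction t using Nat.twoStepInduction with
  | zero => simp [qpoly]; norm_num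
  | one => simp [qpoly]
  | more t ih1 ih2 =>
    rw [qpoly]
    simp only [eval_sub, eval_mul, eval_X, ih1, ih2]
    have h : x * x⁻¹ = 1 := mul_inv_cancel₀ hx
    linear_combination (x ^ t + x⁻¹ ^ t) * h

/-- Equation (ortho3): Vandermonde-type determinant evaluation. -/
theorem stmt_2 {F : Type*} [Field F] (n : ℕ) (hn : 0 < n) (x : Fin n → F)
    (hx : ∀ h, x h ≠ 0) :
    Matrix.det (Matrix.of fun h t : Fin n =>
        x h ^ (((t : ℕ) : ℤ)) + x h ^ (-((t : ℕ) : ℤ))) =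
      2 * (∏ h, x h) ^ ((1 - (n : ℤ))) *
        ∏ t : Fin n, ∏ h ∈ Finset.Iio t, ((x h - x t) * (1 - x h * x t)) := by
  set y : Fin n → F := fun h => x h + (x h)⁻¹ with hy
  have hM : (Matrix.of fun h t : Fin n => x h ^ (((t : ℕ) : ℤ)) + x h ^ (-((t : ℕ) : ℤ))) =
      Matrix.of (fun h t : Fin n => (qpoly F t).eval (y h)) := by
    ext h t
    simp only [Matrix.of_apply, hy, qpoly_eval (x h) (hx h), zpow_natCast, zpow_neg, inv_pow]
  rw [hM, Matrix.eval_matrixOfPolynomials_eq_vandermonde_mul_matrixOfPolynomials y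
    (fun t => qpoly F t) (fun t => (qpoly_deg_coeff F t).1), Matrix.det_mul]
  -- determinant of the upper-triangular coefficient matrix is 2
  have hcoef : (Matrix.of fun i j : Fin n => (qpoly F (j : ℕ)).coeff i).det = 2 := by
    rw [Matrix.det_of_upperTriangular]
    · have : ∀ i : Fin n, (qpoly F (i : ℕ)).coeff i = if (i : ℕ) = 0 then 2 else 1 :=
        fun i => (qpoly_deg_coeff F i).2
      simp only [Matrix.of_apply, this]
      rw [Finset.prod_eq_single (⟨0, hn⟩ : Fin n)]
      · simp
      · intro j _ hj
        rw [if_neg]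
        simpa [Fin.ext_iff] using hj
      · simp
    · intro i j hij
      exact Polynomial.coeff_eq_zero_of_natDegree_lt
        (lt_of_le_of_lt (qpoly_deg_coeff F j).1 hij)
  rw [hcoef, Matrix.det_vandermonde]
  -- swap the double product
  have hswap : ∀ f : Fin n → Fin n → F,
      ∏ i : Fin n, ∏ j ∈ Ioi i, f i j = ∏ j : Fin n, ∏ i ∈ Iio j, f i j := by
    intro f
    exact Finset.prod_comm' (by simp [mem_Ioi, mem_Iio])
  rw [hswap]
  -- rewrite each factor
  have step : ∀ t h : Fin n, y t - y h =
      (x h - x t) * (1 - x h * x t) * (x h * x t)⁻¹ := by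
    intro t h
    have h1 : x t ≠ 0 := hx t
    have h2 : x h ≠ 0 := hx h
    simp only [hy]
    field_simp
    ring
  simp only [step, Finset.prod_mul_distrib]
  -- the product of inverses
  have hprod : ∏ t : Fin n, ∏ h ∈ Iio t, (x h * x t) = (∏ h, x h) ^ (n - 1) := by
    simp only [Finset.prod_mul_distrib]
    rw [← hswap fun i j => x i]
    simp only [Finset.prod_const, Fin.card_Ioi, Fin.card_Iio]
    rw [← Finset.prod_mul_distrib, ← Finset.prod_pow]
    refine Finset.prod_congr rfl fun i _ => ?_
    rw [← pow_add]
    congr 1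
    omega
  have hinv : ∏ t : Fin n, ∏ h ∈ Iio t, (x h * x t)⁻¹ = (∏ h, x h) ^ (1 - (n : ℤ)) := by
    simp only [Finset.prod_inv_distrib]
    rw [hprod]
    have hcast : (1 - (n : ℤ)) = -(((n - 1 : ℕ) : ℤ)) := by
      have := Nat.cast_sub (R := ℤ) hn
      omega
    rw [hcast, zpow_neg, zpow_natCast]
  rw [hinv]
  ring
end

section
/- For any positive integer n and nonzero field elements x_1,...,x_n, the n×n determinant det(x_h^{t} - x_h^{-t})_{1≤h,t≤n} equals (x_1···x_n)^{-n} · ∏_{1≤h<t≤n}(x_h - x_t)(1 - x_h x_t) · ∏_{h=1}^n (x_h^2 - 1). -/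
open Polynomial Finset Matrix

/-!
Since `x ^ (k + 1) - x ^ (-(k + 1)) = (x - x⁻¹) * S_k (x + x⁻¹)` for the rescaled Chebyshev
polynomial `S_k` of the second kind, which is monic of degree `k`, the matrix is
`diag (x_h - x_h⁻¹)` times the matrix `(S_t (z_h))` with `z_h = x_h + x_h⁻¹`, and the determinant
of the latter is the Vandermonde determinant `∏_{h < t} (z_t - z_h)`. It remains to note
`z_t - z_h = (x_h - x_t) (1 - x_h x_t) / (x_h x_t)` and `x - x⁻¹ = (x² - 1) / x`: every `x_h`
then occurs in the denominator exactly `n` times.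
-/

namespace Polynomial.Chebyshev

theorem degree_S_natCast {R : Type*} [CommRing R] [Nontrivial R] (n : ℕ) :
    (S R n).degree = n := by
  induction n using Nat.twoStepInduction with
  | zero => simp
  | one => simp
  | more n ih0 ih1 =>
    push_cast at ih1 ⊢
    have hX : (X * S R (n + 1)).degree = (n : WithBot ℕ) + 2 := by
      rw [mul_comm, degree_mul_X, ih1, add_assoc]; rfl
    rw [S_add_two, degree_sub_eq_left_of_degree_lt, hX]
    rw [hX, ih0]
    exact_mod_cast (by omega : n < n + 2)

theorem monic_S_natCast {R : Type*} [CommRing R] (n : ℕ) : (S R n).Monic := by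
  nontriviality R
  induction n using Nat.twoStepInduction with
  | zero => simp
  | one => simp
  | more n _ ih1 =>
    push_cast at ih1 ⊢
    rw [S_add_two]
    refine (monic_X.mul ih1).sub_of_left ?_
    have h1 := degree_S_natCast (R := R) (n + 1)
    push_cast at h1
    rw [mul_comm, degree_mul_X, h1, degree_S_natCast]
    exact_mod_cast (by omega : n < n + 1 + 1)

theorem sub_inv_mul_eval_S_add_inv {K : Type*} [Field K] {x : K} (hx : x ≠ 0) (n : ℤ) :
    (x - x⁻¹) * (S K n).eval (x + x⁻¹) = x ^ (n + 1) - x ^ (-(n + 1)) := by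
  have hrec (m : ℤ) : x ^ (m + 1) - x ^ (-(m + 1)) =
      (x + x⁻¹) * (x ^ m - x ^ (-m)) - (x ^ (m - 1) - x ^ (-(m - 1))) := by
    rw [neg_add', neg_sub', sub_neg_eq_add, zpow_add_one₀ hx, zpow_sub_one₀ hx, zpow_add_one₀ hx,
      zpow_sub_one₀ hx]
    field_simp
    ring
  induction n using Chebyshev.induct with
  | zero => simp
  | one => simp; ring
  | add_two n ih1 ih0 =>
    rw [S_add_two, eval_sub, eval_mul, eval_X, mul_sub, mul_left_comm, ih1, ih0]
    linear_combination (norm := ring_nf) -hrec (n + 2)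
  | neg_add_one n ih0 ih1 =>
    rw [S_sub_one, eval_sub, eval_mul, eval_X, mul_sub, mul_left_comm, ih0, ih1]
    linear_combination (norm := ring_nf) -hrec (-n + 1)

theorem det_of_eval_S {R : Type*} [CommRing R] {n : ℕ} (v : Fin n → R) :
    (of fun i j : Fin n => (S R (j : ℕ)).eval (v i)).det =
      ∏ i : Fin n, ∏ j ∈ Ioi i, (v j - v i) := by
  nontriviality R
  rw [← det_eval_matrixOfPolynomials_eq_det_vandermonde v (fun j => S R (j : ℕ))
    (fun j => natDegree_eq_of_degree_eq_some (degree_S_natCast _)) (fun j => monic_S_natCast _),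
    det_vandermonde]

end Polynomial.Chebyshev

open Polynomial.Chebyshev

theorem Fin.prod_mul_prod_Iio_mul_eq_pow {M : Type*} [CommMonoid M] {n : ℕ} (y : Fin n → M) :
    (∏ i, y i) * ∏ j : Fin n, ∏ i ∈ Iio j, (y i * y j) = (∏ i, y i) ^ n := by
  have hswap : ∏ j : Fin n, ∏ i ∈ Iio j, y i = ∏ i : Fin n, ∏ _j ∈ Ioi i, y i :=
    prod_comm' (by simp)
  calc (∏ i, y i) * ∏ j : Fin n, ∏ i ∈ Iio j, (y i * y j)
      = (∏ i, y i) * ((∏ j : Fin n, ∏ i ∈ Iio j, y i) * ∏ j : Fin n, ∏ _i ∈ Iio j, y j) := by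
        simp only [prod_mul_distrib]
    _ = ∏ i : Fin n, y i * (y i ^ (n - 1 - i) * y i ^ (i : ℕ)) := by
        rw [hswap]
        simp only [Finset.prod_const, Fin.card_Ioi, Fin.card_Iio, prod_mul_distrib]
    _ = (∏ i, y i) ^ n := by
        rw [← prod_pow]
        refine prod_congr rfl fun i _ => ?_
        rw [← pow_add, ← pow_succ']
        congr 1
        omega

theorem Matrix.det_of_zpow_sub_zpow_neg {K : Type*} [Field K] {n : ℕ} (x : Fin n → K)
    (hx : ∀ i, x i ≠ 0) :
    (of fun i j : Fin n => x i ^ ((j : ℕ) + 1 : ℤ) - x i ^ (-((j : ℕ) + 1 : ℤ))).det =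
      (∏ i, (x i - (x i)⁻¹)) * ∏ i : Fin n, ∏ j ∈ Ioi i, (x j + (x j)⁻¹ - (x i + (x i)⁻¹)) := by
  have hfactor : (of fun i j : Fin n => x i ^ ((j : ℕ) + 1 : ℤ) - x i ^ (-((j : ℕ) + 1 : ℤ))) =
      diagonal (fun i => x i - (x i)⁻¹) *
        of fun i (j : Fin n) => (S K (j : ℕ)).eval (x i + (x i)⁻¹) := by
    ext i j
    rw [diagonal_mul, of_apply, of_apply, sub_inv_mul_eval_S_add_inv (hx i)]
  rw [hfactor, det_mul, det_diagonal, det_of_eval_S]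

theorem add_inv_sub_add_inv {K : Type*} [Field K] {a b : K} (ha : a ≠ 0) (hb : b ≠ 0) :
    b + b⁻¹ - (a + a⁻¹) = (a - b) * (1 - a * b) * (a⁻¹ * b⁻¹) := by
  field_simp
  ring

theorem stmt_3_general {F : Type*} [Field F] (n : ℕ) (x : Fin n → F)
    (hx : ∀ h, x h ≠ 0) :
    Matrix.det (Matrix.of fun h t : Fin n =>
        x h ^ (((t : ℕ) + 1 : ℤ)) - x h ^ (-((t : ℕ) + 1 : ℤ))) =
      (∏ h, x h) ^ ((-(n : ℤ))) *
        (∏ t : Fin n, ∏ h ∈ Finset.Iio t, ((x h - x t) * (1 - x h * x t))) *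
        ∏ h, (x h ^ 2 - 1) := by
  have hswap : ∏ h : Fin n, ∏ t ∈ Ioi h, (x t + (x t)⁻¹ - (x h + (x h)⁻¹)) =
      ∏ t : Fin n, ∏ h ∈ Iio t, (x t + (x t)⁻¹ - (x h + (x h)⁻¹)) :=
    prod_comm' (by simp)
  have hdiag (h : Fin n) : x h - (x h)⁻¹ = (x h ^ 2 - 1) * (x h)⁻¹ := by
    field_simp [hx h]
  have hpow : (∏ h, x h) ^ (-(n : ℤ)) =
      (∏ h, (x h)⁻¹) * ∏ t : Fin n, ∏ h ∈ Iio t, ((x h)⁻¹ * (x t)⁻¹) := by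
    rw [Fin.prod_mul_prod_Iio_mul_eq_pow, prod_inv_distrib, inv_pow, _root_.zpow_neg, zpow_natCast]
  rw [det_of_zpow_sub_zpow_neg x hx, hswap, hpow]
  simp only [hdiag, add_inv_sub_add_inv (hx _) (hx _), prod_mul_distrib]
  ring

/-- Equation (sympl): symplectic Vandermonde-type determinant evaluation. -/
theorem stmt_3 {F : Type*} [Field F] (n : ℕ) (hn : 0 < n) (x : Fin n → F)
    (hx : ∀ h, x h ≠ 0) :
    Matrix.det (Matrix.of fun h t : Fin n =>
        x h ^ (((t : ℕ) + 1 : ℤ)) - x h ^ (-((t : ℕ) + 1 : ℤ))) =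
      (∏ h, x h) ^ ((-(n : ℤ))) *
        (∏ t : Fin n, ∏ h ∈ Finset.Iio t, ((x h - x t) * (1 - x h * x t))) *
        ∏ h, (x h ^ 2 - 1) :=
  stmt_3_general n x hx
end

section
/- Let m be a positive integer and λ_1,...,λ_n real numbers. Then det(sin(π h λ_t / m))_{1≤h,t≤n} = 2^{n²-n} · ∏_{1≤h<t≤n} sin(π(λ_h - λ_t)/(2m)) · ∏_{1≤h≤t≤n} sin(π(λ_h + λ_t)/(2m)). -/
/-!
Since `sin ((h + 1) θ) = sin θ · U_h (cos θ)` for the Chebyshev polynomials `U_h` of the second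
kind, whose leading coefficient is `2 ^ h`, the sine matrix is a row-scaled polynomial
Vandermonde matrix: its determinant is `∏ₜ sin θₜ · ∏_{h<t} 2 (cos θₜ - cos θₕ)`. The identity
`cos θₜ - cos θₕ = 2 sin ((θₕ - θₜ)/2) sin ((θₕ + θₜ)/2)` and `sin θₜ = sin ((θₜ + θₜ)/2)` then
give the product formula, with `θₜ = π λₜ / m`.
-/

open Real

open Polynomial Finset in
theorem Matrix.det_eval_matrixOfPolynomials {R : Type*} [CommRing R] {n : ℕ} (v : Fin n → R)
    (p : Fin n → R[X]) (h_deg : ∀ i, (p i).natDegree ≤ i) :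
    (Matrix.of fun i j => (p j).eval (v i)).det =
      (∏ i, (p i).coeff i) * ∏ i : Fin n, ∏ j ∈ Ioi i, (v j - v i) := by
  rw [eval_matrixOfPolynomials_eq_vandermonde_mul_matrixOfPolynomials v p h_deg, det_mul,
    det_of_isUpperTriangular (matrixOfPolynomials_blockTriangular p h_deg), det_vandermonde,
    mul_comm]
  rfl

open Polynomial Chebyshev Finset in
theorem Polynomial.Chebyshev.det_eval_U {R : Type*} [CommRing R] [IsDomain R] [NeZero (2 : R)]
    {n : ℕ} (x : Fin n → R) :
    (Matrix.of fun i j : Fin n => (U R i).eval (x j)).det =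
      ∏ j : Fin n, ∏ i ∈ Iio j, 2 * (x j - x i) := by
  have h_deg (i : Fin n) : (U R i).natDegree ≤ i := (natDegree_U_natCast R i).le
  have h_coeff (i : Fin n) : (U R i).coeff i = ∏ _j ∈ Iio i, 2 := by
    rw [prod_const, Fin.card_Iio, ← leadingCoeff_U_natCast R i, leadingCoeff,
      natDegree_U_natCast]
  calc _ = (Matrix.of fun i j : Fin n => (U R j).eval (x i)).det := by
        rw [← Matrix.det_transpose]; rfl
    _ = _ := Matrix.det_eval_matrixOfPolynomials x _ h_deg
    _ = _ := by
        rw [prod_comm' (t' := univ) (s' := Iio) (by simp), ← prod_mul_distrib]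
        simp_rw [h_coeff, prod_mul_distrib]

theorem pow_sq_sub_self_eq_prod {M : Type*} [CommMonoid M] (a : M) (n : ℕ) :
    a ^ (n ^ 2 - n) = ∏ t : Fin n, (a ^ 2) ^ (t : ℕ) := by
  rw [Finset.prod_pow_eq_pow_sum, ← pow_mul, Fin.sum_univ_eq_sum_range (fun i => i),
    mul_comm, Finset.sum_range_id_mul_two, Nat.mul_sub_one, sq]

theorem Real.two_mul_cos_sub_cos (a b : ℝ) :
    2 * (cos b - cos a) = 2 ^ 2 * sin ((a - b) / 2) * sin ((a + b) / 2) := by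
  rw [cos_sub_cos, show (b - a) / 2 = -((a - b) / 2) by ring, sin_neg, add_comm b]
  ring

open Finset Polynomial.Chebyshev in
theorem Real.det_sin_succ_mul {n : ℕ} (θ : Fin n → ℝ) :
    (Matrix.of fun h t : Fin n => sin (((h : ℕ) + 1) * θ t)).det =
      2 ^ (n ^ 2 - n) * (∏ t : Fin n, ∏ h ∈ Iio t, sin ((θ h - θ t) / 2)) *
        ∏ t : Fin n, ∏ h ∈ Iic t, sin ((θ h + θ t) / 2) := by
  have h_sin (h t : Fin n) :
      sin (((h : ℕ) + 1) * θ t) = sin (θ t) * (U ℝ h).eval (cos (θ t)) := by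
    rw [← Int.cast_natCast, ← U_real_cos, mul_comm]
  simp_rw [h_sin]
  refine (Matrix.det_mul_row (fun t => sin (θ t))
    (.of fun h t => (U ℝ h).eval (cos (θ t)))).trans ?_
  simp_rw [det_eval_U, pow_sq_sub_self_eq_prod, ← Iio_insert, prod_insert notMem_Iio_self,
    add_self_div_two, ← prod_mul_distrib]
  refine prod_congr rfl fun t _ => ?_
  simp_rw [two_mul_cos_sub_cos, prod_mul_distrib, prod_const, Fin.card_Iio]
  ring

theorem stmt_4_general (m : ℕ) (n : ℕ) (lam : Fin n → ℝ) :
    Matrix.det (Matrix.of fun h t : Fin n =>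
        Real.sin (π * ((h : ℕ) + 1) * lam t / m)) =
      2 ^ (n ^ 2 - n) *
        (∏ t : Fin n, ∏ h ∈ Finset.Iio t, Real.sin (π * (lam h - lam t) / (2 * m))) *
        ∏ t : Fin n, ∏ h ∈ Finset.Iic t, Real.sin (π * (lam h + lam t) / (2 * m)) := by
  convert det_sin_succ_mul fun t => π * lam t / m using 5 <;> ring_nf

/-- Equation (sindet): determinant of sines evaluation. -/
theorem stmt_4 (m : ℕ) (hm : 0 < m) (n : ℕ) (hn : 0 < n) (lam : Fin n → ℝ) :
    Matrix.det (Matrix.of fun h t : Fin n =>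
        Real.sin (π * ((h : ℕ) + 1) * lam t / m)) =
      2 ^ (n ^ 2 - n) *
        (∏ t : Fin n, ∏ h ∈ Finset.Iio t, Real.sin (π * (lam h - lam t) / (2 * m))) *
        ∏ t : Fin n, ∏ h ∈ Finset.Iic t, Real.sin (π * (lam h + lam t) / (2 * m)) :=
  stmt_4_general m n lam
end

section
/- Let m be a positive real number and λ_1,...,λ_n real numbers. Then det(sin(π(2h-1)λ_t/(2m)))_{1≤h,t≤n} = 2^{n²-n} · ∏_{1≤h<t≤n} [ sin(π(λ_h-λ_t)/(2m)) · sin(π(λ_h+λ_t)/(2m)) ] · ∏_{h=1}^n sin(π λ_h/(2m)). -/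
open Real Polynomial

noncomputable def SS : ℕ → ℝ[X]
  | 0 => 1
  | 1 => C 3 - C 4 * X
  | (k+2) => (C 2 - C 4 * X) * SS (k+1) - SS k

lemma SS_natDegree_le : ∀ k, (SS k).natDegree ≤ k := by
  intro k
  induction k using Nat.twoStepInduction with
  | zero => simp [SS]
  | one =>
    rw [show SS 1 = C 3 - C 4 * X from rfl]
    compute_degree
  | more k ih1 ih2 =>
    rw [show SS (k+2) = (C 2 - C 4 * X) * SS (k+1) - SS k from rfl]
    refine (natDegree_sub_le _ _).trans (max_le ?_ (ih1.trans (by omega)))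
    refine (natDegree_mul_le).trans ?_
    have h1 : (C (2:ℝ) - C 4 * X).natDegree ≤ 1 := by compute_degree
    omega

lemma SS_coeff : ∀ k, (SS k).coeff k = (-4 : ℝ)^k := by
  intro k
  induction k using Nat.twoStepInduction with
  | zero => simp [SS]
  | one =>
    rw [show SS 1 = C 3 - C 4 * X from rfl]
    simp
  | more k ih1 ih2 =>
    rw [show SS (k+2) = (C 2 - C 4 * X) * SS (k+1) - SS k from rfl]
    have h1 : (SS (k+1)).coeff (k+2) = 0 :=
      coeff_eq_zero_of_natDegree_lt (lt_of_le_of_lt (SS_natDegree_le (k+1)) (by omega))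
    have h2 : (SS k).coeff (k+2) = 0 :=
      coeff_eq_zero_of_natDegree_lt (lt_of_le_of_lt (SS_natDegree_le k) (by omega))
    rw [coeff_sub, sub_mul, coeff_sub, coeff_C_mul, mul_assoc, coeff_C_mul,
      show k+2 = (k+1)+1 from rfl, coeff_X_mul, ih2, h2]
    rw [show (k+1)+1 = k+2 from rfl, h1]
    ring

lemma SS_eval (x : ℝ) : ∀ k : ℕ, Real.sin ((2*(k:ℝ)+1)*x)
    = Real.sin x * (SS k).eval (Real.sin x ^ 2) := by
  intro k
  induction k using Nat.twoStepInduction with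
  | zero => norm_num [SS]
  | one =>
    rw [show SS 1 = C 3 - C 4 * X from rfl]
    rw [show (2*((1:ℕ):ℝ)+1)*x = 3*x by push_cast; ring, Real.sin_three_mul]
    simp; ring
  | more k ih1 ih2 =>
    have key : Real.sin ((2*((k+2:ℕ):ℝ)+1)*x)
        = 2*Real.cos (2*x) * Real.sin ((2*((k+1:ℕ):ℝ)+1)*x) - Real.sin ((2*(k:ℝ)+1)*x) := by
      have e1 := Real.sin_add ((2*(k:ℝ)+3)*x) (2*x)
      have e2 := Real.sin_sub ((2*(k:ℝ)+3)*x) (2*x)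
      push_cast
      rw [show (2*((k:ℝ)+2)+1)*x = (2*(k:ℝ)+3)*x + 2*x by ring,
        show (2*((k:ℝ)+1)+1)*x = (2*(k:ℝ)+3)*x by ring,
        show (2*(k:ℝ)+1)*x = (2*(k:ℝ)+3)*x - 2*x by ring, e1, e2]
      ring
    have hc : Real.cos (2*x) = 1 - 2 * Real.sin x ^ 2 := by
      have h := Real.sin_sq_add_cos_sq x
      rw [Real.cos_two_mul]; linarith
    rw [key, ih1, ih2, hc, show SS (k+2) = (C 2 - C 4 * X) * SS (k+1) - SS k from rfl]
    simp only [eval_sub, eval_mul, eval_C, eval_X]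
    ring

lemma sin_sub_mul_sin_add (a b : ℝ) :
    Real.sin (a - b) * Real.sin (a + b) = Real.sin a ^ 2 - Real.sin b ^ 2 := by
  rw [Real.sin_sub, Real.sin_add]
  have ha := Real.sin_sq_add_cos_sq a
  have hb := Real.sin_sq_add_cos_sq b
  nlinarith [ha, hb]

/-- Equation (sindet1): determinant of sines with odd multipliers. -/
theorem stmt_5 (m : ℝ) (hm : 0 < m) (n : ℕ) (hn : 0 < n) (lam : Fin n → ℝ) :
    Matrix.det (Matrix.of fun h t : Fin n =>
        Real.sin (π * (2 * ((h : ℕ) + 1) - 1) * lam t / (2 * m))) =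
      2 ^ (n ^ 2 - n) *
        (∏ t : Fin n, ∏ h ∈ Finset.Iio t,
          Real.sin (π * (lam h - lam t) / (2 * m)) * Real.sin (π * (lam h + lam t) / (2 * m))) *
        ∏ h : Fin n, Real.sin (π * lam h / (2 * m)) := by
  set x : Fin n → ℝ := fun t => π * lam t / (2 * m) with hxdef
  set u : Fin n → ℝ := fun t => Real.sin (x t) ^ 2 with hudef
  set K : ℕ := ∑ i : Fin n, (i : ℕ) with hKdef
  -- arithmetic about K
  have hK2 : 2 * K = n ^ 2 - n := by
    have h1 : K = ∑ i ∈ Finset.range n, i := by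
      rw [hKdef]; exact Fin.sum_univ_eq_sum_range (fun i => i) n
    have h2 := Finset.sum_range_id_mul_two n
    have h3 : n * (n - 1) = n ^ 2 - n := by
      cases n with
      | zero => simp
      | succ k =>
        have e1 : (k+1)*(k+1) = k*k + 2*k + 1 := by ring
        have e2 : (k+1)*(k+1-1) = k*k + k := by
          simp only [Nat.add_sub_cancel]; ring
        rw [pow_two]; omega
    omega
  -- rewrite the matrix
  have hM : (Matrix.of fun h t : Fin n =>
        Real.sin (π * (2 * ((h : ℕ) + 1) - 1) * lam t / (2 * m))) =
      Matrix.of fun h t : Fin n => Real.sin (x t) *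
        (Matrix.of fun h t : Fin n => (SS (h : ℕ)).eval (u t)) h t := by
    ext h t
    have harg : π * (2 * ((h : ℕ) + 1) - 1) * lam t / (2 * m) = (2*((h:ℕ):ℝ)+1) * x t := by
      rw [hxdef]; ring
    simp only [Matrix.of_apply, harg, SS_eval (x t) (h : ℕ), hudef]
  rw [hM, Matrix.det_mul_row]
  -- determinant of the polynomial matrix
  have hdetA : (Matrix.of fun h t : Fin n => (SS (h : ℕ)).eval (u t)).det
      = (Matrix.vandermonde u).det * ∏ i : Fin n, (-4 : ℝ) ^ (i : ℕ) := by
    rw [← Matrix.det_transpose]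
    have ht : (Matrix.of fun h t : Fin n => (SS (h : ℕ)).eval (u t)).transpose
        = Matrix.of fun i j : Fin n => (SS (j : ℕ)).eval (u i) := by
      ext i j; rfl
    rw [ht, Matrix.eval_matrixOfPolynomials_eq_vandermonde_mul_matrixOfPolynomials u
      (fun j => SS (j : ℕ)) (fun j => SS_natDegree_le (j : ℕ)), Matrix.det_mul]
    congr 1
    rw [Matrix.det_of_upperTriangular (M := Matrix.of fun i j : Fin n => (SS (j:ℕ)).coeff (i:ℕ))
      (by
        intro i j hji
        exact coeff_eq_zero_of_natDegree_lt
          (lt_of_le_of_lt (SS_natDegree_le (j : ℕ)) hji))]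
    exact Finset.prod_congr rfl fun i _ => SS_coeff (i : ℕ)
  rw [hdetA, Matrix.det_vandermonde]
  -- the power product
  have hpow : (∏ i : Fin n, (-4 : ℝ) ^ (i : ℕ)) = (-1 : ℝ) ^ K * 2 ^ (n ^ 2 - n) := by
    rw [Finset.prod_pow_eq_pow_sum, ← hKdef,
      show (-4 : ℝ) = -1 * 2 ^ 2 by norm_num, mul_pow, ← pow_mul, hK2]
  -- rewrite the RHS double product
  have hRHS : (∏ t : Fin n, ∏ h ∈ Finset.Iio t,
        Real.sin (π * (lam h - lam t) / (2 * m)) * Real.sin (π * (lam h + lam t) / (2 * m)))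
      = (-1 : ℝ) ^ K * ∏ t : Fin n, ∏ h ∈ Finset.Iio t, (u t - u h) := by
    have step : ∀ t : Fin n, ∀ h ∈ Finset.Iio t,
        Real.sin (π * (lam h - lam t) / (2 * m)) * Real.sin (π * (lam h + lam t) / (2 * m))
          = -1 * (u t - u h) := by
      intro t h _
      have h1 : π * (lam h - lam t) / (2 * m) = x h - x t := by rw [hxdef]; ring
      have h2 : π * (lam h + lam t) / (2 * m) = x h + x t := by rw [hxdef]; ring
      rw [h1, h2, sin_sub_mul_sin_add, hudef]; ring
    rw [Finset.prod_congr rfl fun t _ => Finset.prod_congr rfl (step t)]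
    rw [Finset.prod_congr rfl fun t _ => Finset.prod_mul_distrib]
    rw [Finset.prod_mul_distrib]
    congr 1
    simp only [Finset.prod_const, Fin.card_Iio]
    rw [Finset.prod_pow_eq_pow_sum, ← hKdef]
  rw [hRHS]
  -- swap the order of the Vandermonde product
  have hswap : (∏ i : Fin n, ∏ j ∈ Finset.Ioi i, (u j - u i))
      = ∏ t : Fin n, ∏ h ∈ Finset.Iio t, (u t - u h) := by
    rw [Finset.prod_comm' (s' := fun j => Finset.Iio j) (t' := Finset.univ)
      (by intro i j; simp [Finset.mem_Ioi, Finset.mem_Iio])]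
  rw [hswap, hpow]
  ring
end

section
/- Let m be a positive real number and λ_1,...,λ_n real numbers. Then det(cos(π(h-1)λ_t/m))_{1≤h,t≤n} = 2^{n²-2n+1} · ∏_{1≤h<t≤n} [ sin(π(λ_h-λ_t)/(2m)) · sin(π(λ_h+λ_t)/(2m)) ]. -/
open Real

open Polynomial Polynomial.Chebyshev in
lemma cheb_props : ∀ k : ℕ, (T ℝ k).natDegree ≤ k ∧
    (T ℝ k).coeff k = if k = 0 then 1 else 2 ^ (k - 1)
  | 0 => by simp [T_zero]
  | 1 => by simp [T_one]
  | (k+2) => by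
    have ih1 := cheb_props (k+1)
    have ih0 := cheb_props k
    push_cast at ih1 ih0 ⊢
    have hT : T ℝ ((k:ℤ)+2) = 2 * X * T ℝ ((k:ℤ)+1) - T ℝ (k:ℤ) := T_add_two ℝ k
    rw [hT]
    constructor
    · refine le_trans (natDegree_sub_le _ _) (max_le ?_ (le_trans ih0.1 (by omega)))
      refine le_trans (natDegree_mul_le) ?_
      have h2X : (2 * X : ℝ[X]).natDegree ≤ 1 :=
        le_trans (natDegree_mul_le) (by simp)
      omega
    · have hsplit : 2 * X * T ℝ ((k:ℤ)+1) = X * T ℝ ((k:ℤ)+1) + X * T ℝ ((k:ℤ)+1) := by ring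
      have h0 : (T ℝ (k:ℤ)).coeff (k+2) = 0 :=
        coeff_eq_zero_of_natDegree_lt (lt_of_le_of_lt ih0.1 (by omega))
      rw [coeff_sub, hsplit, coeff_add, coeff_X_mul, h0, ih1.2]
      simp [pow_succ, two_mul, mul_comm]

lemma expsum : ∀ n : ℕ, (∑ i ∈ Finset.range n, ((i - 1) + i)) = (n-1)^2
  | 0 => by simp
  | 1 => by simp
  | (k+2) => by
    rw [Finset.sum_range_succ, expsum (k+1)]
    have h1 : k + 1 - 1 = k := by omega
    have h2 : k + 2 - 1 = k + 1 := by omega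
    rw [h1, h2]
    ring

/-- Equation (cosdet): determinant of cosines evaluation. -/
theorem stmt_6 (m : ℝ) (hm : 0 < m) (n : ℕ) (hn : 0 < n) (lam : Fin n → ℝ) :
    Matrix.det (Matrix.of fun h t : Fin n =>
        Real.cos (π * ((h : ℕ) : ℝ) * lam t / m)) =
      (2 : ℝ) ^ ((n : ℤ) ^ 2 - 2 * (n : ℤ) + 1) *
        ∏ t : Fin n, ∏ h ∈ Finset.Iio t,
          Real.sin (π * (lam h - lam t) / (2 * m)) * Real.sin (π * (lam h + lam t) / (2 * m)) := by
  classical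
  set v : Fin n → ℝ := fun t => Real.cos (π * lam t / m) with hv
  set p : Fin n → Polynomial ℝ := fun h => Polynomial.Chebyshev.T ℝ (h : ℕ) with hp
  have hdeg : ∀ i : Fin n, (p i).natDegree ≤ i := fun i => (cheb_props i).1
  have hM : (Matrix.of fun h t : Fin n => Real.cos (π * ((h:ℕ):ℝ) * lam t / m)) =
      (Matrix.of fun t h : Fin n => (p h).eval (v t)).transpose := by
    ext h t
    simp only [Matrix.transpose_apply, Matrix.of_apply, hp, hv]
    rw [Polynomial.Chebyshev.T_real_cos]
    congr 1
    push_cast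
    ring
  rw [hM, Matrix.det_transpose,
    Matrix.eval_matrixOfPolynomials_eq_vandermonde_mul_matrixOfPolynomials v p hdeg,
    Matrix.det_mul, Matrix.det_vandermonde]
  -- determinant of the coefficient matrix
  have hcoeff : (Matrix.of fun (i j : Fin n) => (p j).coeff i).det
      = ∏ i : Fin n, (if (i:ℕ) = 0 then 1 else 2 ^ ((i:ℕ) - 1) : ℝ) := by
    rw [Matrix.det_of_upperTriangular]
    · exact Finset.prod_congr rfl fun i _ => (cheb_props i).2
    · intro i j hij
      exact Polynomial.coeff_eq_zero_of_natDegree_lt (lt_of_le_of_lt (hdeg j) hij)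
  rw [hcoeff]
  -- swap the Vandermonde product to Iio form
  have hswap : (∏ i : Fin n, ∏ j ∈ Finset.Ioi i, (v j - v i))
      = ∏ t : Fin n, ∏ h ∈ Finset.Iio t, (v t - v h) :=
    Finset.prod_comm' (by simp [Finset.mem_Ioi, Finset.mem_Iio])
  rw [hswap]
  -- each factor
  have hfac : ∀ h t : Fin n, v t - v h =
      2 * (Real.sin (π * (lam h - lam t) / (2*m)) * Real.sin (π * (lam h + lam t) / (2*m))) := by
    intro h t
    rw [hv]
    simp only
    rw [Real.cos_sub_cos]
    have h1 : (π * lam t / m + π * lam h / m) / 2 = π * (lam h + lam t) / (2*m) := by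
      field_simp; ring
    have h2 : (π * lam t / m - π * lam h / m) / 2 = -(π * (lam h - lam t) / (2*m)) := by
      field_simp; ring
    rw [h1, h2, Real.sin_neg]
    ring
  have hinner : ∀ t : Fin n, (∏ h ∈ Finset.Iio t, (v t - v h))
      = 2 ^ (t:ℕ) * ∏ h ∈ Finset.Iio t,
          (Real.sin (π * (lam h - lam t) / (2*m)) * Real.sin (π * (lam h + lam t) / (2*m))) := by
    intro t
    rw [Finset.prod_congr rfl fun h _ => hfac h t, Finset.prod_mul_distrib,
      Finset.prod_const, Fin.card_Iio]
  rw [Finset.prod_congr rfl fun t _ => hinner t, Finset.prod_mul_distrib]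
  -- collect powers of two
  have hpow : (∏ i : Fin n, (if (i:ℕ) = 0 then 1 else 2 ^ ((i:ℕ) - 1) : ℝ))
      * (∏ t : Fin n, (2:ℝ) ^ (t:ℕ))
      = (2:ℝ) ^ ((n : ℤ)^2 - 2*(n:ℤ) + 1) := by
    rw [← Finset.prod_mul_distrib]
    have h1 : ∀ i : Fin n, ((if (i:ℕ) = 0 then 1 else 2 ^ ((i:ℕ) - 1) : ℝ)) * 2 ^ (i:ℕ)
        = 2 ^ (((i:ℕ) - 1) + (i:ℕ)) := by
      intro i
      rcases Nat.eq_zero_or_pos (i:ℕ) with h | h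
      · simp [h]
      · rw [if_neg (by omega), ← pow_add]
    rw [Finset.prod_congr rfl fun i _ => h1 i, Finset.prod_pow_eq_pow_sum]
    have h2 : (∑ i : Fin n, (((i:ℕ) - 1) + (i:ℕ))) = (n-1)^2 := by
      rw [Fin.sum_univ_eq_sum_range (fun i => (i - 1) + i), expsum]
    rw [h2]
    have h3 : ((n:ℤ)^2 - 2*(n:ℤ) + 1) = (((n-1)^2 : ℕ) : ℤ) := by
      have : ((n - 1 : ℕ) : ℤ) = (n:ℤ) - 1 := by
        rw [Nat.cast_sub hn]; norm_num
      push_cast [this]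
      ring
    rw [h3, zpow_natCast]
  rw [← hpow]
  ring
end

section
/- The number of lattice walks of length k, starting at a fixed point η = (η_1,...,η_n) of ℤⁿ with η_1 > η_2 > ... > η_n > η_1 - m, using only positive unit steps +e_j, and staying in the region {x : x_1 > x_2 > ... > x_n > x_1 - m}, equals 2^{-k} times the number of lattice walks of length k starting at η, using steps ±e_j (both signs allowed), and staying in the same region. -/
namespace Stmt18

open Finset

variable {N : ℕ}

/-- The alcove predicate. -/
def P (m : ℕ) (x : Fin (N + 1) → ℤ) : Prop :=
  (∀ a b : Fin (N + 1), a < b → x b < x a) ∧ ∀ a : Fin (N + 1), x 0 - (m : ℤ) < x a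

/-- standard unit vector -/
def e (j : Fin (N + 1)) : Fin (N + 1) → ℤ := Pi.single j 1

open Classical in
/-- number of walks of length `k` from `x` staying in the alcove with steps from `d`. -/
noncomputable def ND (m : ℕ) {J : Type} [Fintype J] (d : J → Fin (N + 1) → ℤ) :
    ℕ → (Fin (N + 1) → ℤ) → ℕ
  | 0, x => if P m x then 1 else 0
  | k + 1, x => if P m x then ∑ j, ND m d k (x + d j) else 0

lemma ND_of_not {m k : ℕ} {J : Type} [Fintype J] {d : J → Fin (N + 1) → ℤ}
    {x : Fin (N + 1) → ℤ} (hx : ¬ P m x) : ND m d k x = 0 := by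
  cases k <;> simp [ND, hx]

lemma P_one {m : ℕ} (hm : 0 < m) (x : Fin 1 → ℤ) : P m x := by
  constructor
  · intro a b hab
    exact absurd (Fin.lt_def.mp hab) (by omega)
  · intro a
    have ha : a = 0 := Fin.ext (by omega)
    subst ha
    omega

/-- L2 : exchange lemma, both "one-sided" memberships follow. -/
lemma L2 {m : ℕ} {x : Fin (N + 1) → ℤ} {i j : Fin (N + 1)} (hij : i ≠ j)
    (hm : 0 < m) (hx : P m x) (hy : P m (x - e j + e i)) :
    P m (x - e j) ∧ P m (x + e i) := by
  obtain ⟨hx1, hx2⟩ := hx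
  obtain ⟨hy1, hy2⟩ := hy
  have key : ∀ a : Fin (N + 1),
      (if a = j then (1 : ℤ) else 0) + (if a = i then (1 : ℤ) else 0) ≤ 1 := by
    intro a
    split_ifs with h1 h2 <;>
      first
        | exact absurd (h2.symm.trans h1) hij
        | omega
  have hm' : (1 : ℤ) ≤ (m : ℤ) := by exact_mod_cast hm
  refine ⟨⟨?_, ?_⟩, ?_, ?_⟩
  · intro a b hab
    have Hx := hx1 a b hab
    have Hy := hy1 a b hab
    have ka := key a
    have kb := key b
    simp only [Pi.sub_apply, Pi.add_apply, e, Pi.single_apply] at Hy ⊢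
    split_ifs at Hy ka kb ⊢ <;> omega
  · intro a
    have Hx2 := hx2 a
    have Hy2 := hy2 a
    have k0 := key 0
    have ka := key a
    simp only [Pi.sub_apply, Pi.add_apply, e, Pi.single_apply] at Hy2 ⊢
    split_ifs at Hy2 k0 ka ⊢ <;> omega
  · intro a b hab
    have Hx := hx1 a b hab
    have Hy := hy1 a b hab
    have ka := key a
    have kb := key b
    simp only [Pi.sub_apply, Pi.add_apply, e, Pi.single_apply] at Hy ⊢
    split_ifs at Hy ka kb ⊢ <;> omega
  · intro a
    have Hx2 := hx2 a
    have Hy2 := hy2 a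
    have k0 := key 0
    have ka := key a
    simp only [Pi.sub_apply, Pi.add_apply, e, Pi.single_apply] at Hy2 ⊢
    split_ifs at Hy2 k0 ka ⊢ <;> omega

/-- characterization of legality of a negative step. -/
lemma claimA {m : ℕ} (hm : 0 < m) {x : Fin (N + 2) → ℤ} (hx : P m x) (j : Fin (N + 2)) :
    P m (x - e j) ↔ (x 0 - (m : ℤ) + 2 ≤ x j ∧ ∀ b, j < b → x b + 2 ≤ x j) := by
  obtain ⟨hx1, hx2⟩ := hx
  have hl0 : Fin.last (N + 1) ≠ 0 := Fin.last_pos.ne'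
  constructor
  · rintro ⟨hy1, hy2⟩
    constructor
    · rcases eq_or_ne j 0 with rfl | hj0
      · have h1 := hy1 0 (Fin.last (N + 1)) Fin.last_pos
        have h2 := hy2 (Fin.last (N + 1))
        simp only [Pi.sub_apply, e, Pi.single_apply, eq_self_iff_true, if_true] at h1 h2
        rw [if_neg hl0] at h1 h2
        omega
      · have h2 := hy2 j
        simp only [Pi.sub_apply, e, Pi.single_apply, eq_self_iff_true, if_true] at h2
        rw [if_neg (fun h => hj0 h.symm)] at h2
        omega
    · intro b hb
      have h := hy1 j b hb
      simp only [Pi.sub_apply, e, Pi.single_apply, eq_self_iff_true, if_true] at h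
      rw [if_neg (ne_of_gt hb)] at h
      omega
  · rintro ⟨h1, h2⟩
    constructor
    · intro a b hab
      rcases eq_or_ne a j with rfl | haj
      · have hbj : b ≠ a := ne_of_gt hab
        have hb2 := h2 b hab
        simp only [Pi.sub_apply, e, Pi.single_apply, eq_self_iff_true, if_true]
        rw [if_neg hbj]
        omega
      · have hxab := hx1 a b hab
        simp only [Pi.sub_apply, e, Pi.single_apply]
        rw [if_neg haj]
        by_cases hbj : b = j
        · rw [if_pos hbj]; omega
        · rw [if_neg hbj]; omega
    · intro a
      have hxa := hx2 a
      by_cases haj : a = j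
      · subst haj
        simp only [Pi.sub_apply, e, Pi.single_apply, eq_self_iff_true, if_true]
        by_cases h0 : (0 : Fin (N + 2)) = a
        · subst h0
          simp only [eq_self_iff_true, if_true]
          omega
        · rw [if_neg h0]
          omega
      · simp only [Pi.sub_apply, e, Pi.single_apply]
        rw [if_neg haj]
        by_cases h0 : (0 : Fin (N + 2)) = j
        · rw [if_pos h0]; omega
        · rw [if_neg h0]; omega

/-- characterization of legality of a positive step. -/
lemma claimB {m : ℕ} (hm : 0 < m) {x : Fin (N + 2) → ℤ} (hx : P m x) (j : Fin (N + 2)) :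
    P m (x + e (j + 1)) ↔ (x 0 - (m : ℤ) + 2 ≤ x j ∧ ∀ b, j < b → x b + 2 ≤ x j) := by
  obtain ⟨hx1, hx2⟩ := hx
  have hl0 : Fin.last (N + 1) ≠ 0 := Fin.last_pos.ne'
  have hm' : (1 : ℤ) ≤ (m : ℤ) := by exact_mod_cast hm
  rcases eq_or_ne j (Fin.last (N + 1)) with rfl | hjl
  · -- j = last, j+1 = 0
    rw [Fin.last_add_one]
    constructor
    · rintro ⟨hy1, hy2⟩
      refine ⟨?_, fun b hb => absurd hb (Fin.le_last b).not_gt⟩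
      have h2 := hy2 (Fin.last (N + 1))
      simp only [Pi.add_apply, e, Pi.single_apply, eq_self_iff_true, if_true] at h2
      rw [if_neg hl0] at h2
      omega
    · rintro ⟨h1, -⟩
      constructor
      · intro a b hab
        have hb0 : b ≠ 0 := by
          intro h
          subst h
          exact absurd hab (Fin.not_lt_zero a)
        simp only [Pi.add_apply, e, Pi.single_apply]
        rw [if_neg hb0]
        by_cases ha0 : a = 0
        · subst ha0
          have hxb := hx1 0 b hab
          simp only [eq_self_iff_true, if_true]
          omega
        · rw [if_neg ha0]
          have hxb := hx1 a b hab
          omega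
      · intro a
        simp only [Pi.add_apply, e, Pi.single_apply, eq_self_iff_true, if_true]
        by_cases ha0 : a = 0
        · subst ha0
          simp only [eq_self_iff_true, if_true]
          omega
        · rw [if_neg ha0]
          rcases eq_or_ne a (Fin.last (N + 1)) with rfl | hal
          · omega
          · have hlt : a < Fin.last (N + 1) := lt_of_le_of_ne (Fin.le_last a) hal
            have hxa := hx1 a (Fin.last (N + 1)) hlt
            omega
  · -- j < last
    have hlt : j < Fin.last (N + 1) := lt_of_le_of_ne (Fin.le_last j) hjl
    have hv : ((j + 1 : Fin (N + 2)) : ℕ) = (j : ℕ) + 1 := Fin.val_add_one_of_lt hlt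
    have hj'0 : j + 1 ≠ 0 := by
      intro h
      have h' := congrArg Fin.val h
      rw [hv] at h'
      simp at h'
    have hjj' : j < j + 1 := by
      rw [Fin.lt_def, hv]
      omega
    have hne : j + 1 ≠ j := by
      intro h
      have h' := congrArg Fin.val h
      rw [hv] at h'
      omega
    constructor
    · rintro ⟨hy1, hy2⟩
      have ha := hy2 (j + 1)
      have hb := hy1 j (j + 1) hjj'
      simp only [Pi.add_apply, e, Pi.single_apply, eq_self_iff_true, if_true] at ha hb
      rw [if_neg (fun h => hj'0 h.symm)] at ha
      rw [if_neg (fun h => hne h.symm)] at hb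
      constructor
      · omega
      · intro b hbj
        rcases eq_or_ne b (j + 1) with rfl | hbj'
        · omega
        · have hb' : j + 1 < b := by
            have hvne : ((j + 1 : Fin (N + 2)) : ℕ) ≠ (b : ℕ) := fun h => hbj' (Fin.ext h.symm)
            rw [Fin.lt_def] at hbj ⊢
            omega
          have h3 := hy1 (j + 1) b hb'
          simp only [Pi.add_apply, e, Pi.single_apply, eq_self_iff_true, if_true] at h3
          rw [if_neg hbj'] at h3
          omega
    · rintro ⟨h1, h2⟩
      constructor
      · intro a b hab
        rcases eq_or_ne b (j + 1) with rfl | hbj'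
        · have hj'j := h2 (j + 1) hjj'
          simp only [Pi.add_apply, e, Pi.single_apply, eq_self_iff_true, if_true]
          rw [if_neg (ne_of_lt hab)]
          rcases eq_or_ne a j with rfl | haj
          · omega
          · have haltj : a < j := by
              have hvne : (a : ℕ) ≠ (j : ℕ) := fun h => haj (Fin.ext h)
              rw [Fin.lt_def, hv] at hab
              rw [Fin.lt_def]
              omega
            have hxa := hx1 a j haltj
            omega
        · simp only [Pi.add_apply, e, Pi.single_apply]
          rw [if_neg hbj']
          by_cases haj' : a = j + 1
          · subst haj'
            have hxb := hx1 (j + 1) b hab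
            simp only [eq_self_iff_true, if_true]
            omega
          · rw [if_neg haj']
            have hxb := hx1 a b hab
            omega
      · intro a
        simp only [Pi.add_apply, e, Pi.single_apply]
        rw [if_neg (fun h => hj'0 h.symm)]
        by_cases haj' : a = j + 1
        · subst haj'
          have hxa := hx2 (j + 1)
          simp only [eq_self_iff_true, if_true]
          omega
        · rw [if_neg haj']
          have hxa := hx2 a
          omega

open Classical in
/-- degree lemma: as many legal negative as positive steps. -/
lemma deg {m : ℕ} (hm : 0 < m) {x : Fin (N + 1) → ℤ} (hx : P m x) (C : ℕ) :
    (∑ j, if P m (x - e j) then C else 0) = ∑ j, if P m (x + e j) then C else 0 := by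
  classical
  induction N with
  | zero =>
    refine Finset.sum_congr rfl fun j _ => ?_
    rw [if_pos (P_one hm _), if_pos (P_one hm _)]
  | succ N' _ =>
    refine Fintype.sum_equiv (finRotate _) _ _ fun j => ?_
    rw [finRotate_succ_apply]
    exact if_congr ((claimA hm hx j).trans (claimB hm hx j).symm) rfl rfl

/-- diagonal double sum swap -/
lemma swap_sum {J : Type} [Fintype J] [DecidableEq J] (t s : J → J → ℕ)
    (hoff : ∀ i j : J, i ≠ j → t j i = s i j) (hdiag : (∑ j, t j j) = ∑ j, s j j) :
    (∑ j, ∑ i, t j i) = ∑ i, ∑ j, s i j := by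
  have ht : ∀ (u : J → J → ℕ), (∑ j, ∑ i, u j i)
      = (∑ j, u j j) + ∑ j, ∑ i, if i = j then 0 else u j i := by
    intro u
    rw [← Finset.sum_add_distrib]
    refine Finset.sum_congr rfl fun j _ => ?_
    have : ∀ i, u j i = (if i = j then u j i else 0) + (if i = j then 0 else u j i) := by
      intro i; split_ifs <;> simp
    rw [Finset.sum_congr rfl fun i _ => this i, Finset.sum_add_distrib,
      Finset.sum_ite_eq' Finset.univ j (fun i => u j i), if_pos (Finset.mem_univ j)]
  rw [ht t, ht fun i j => s i j, hdiag]
  congr 1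
  rw [Finset.sum_comm]
  refine Finset.sum_congr rfl fun i _ => Finset.sum_congr rfl fun j _ => ?_
  by_cases h : i = j
  · simp [h]
  · rw [if_neg h, if_neg (Ne.symm h), hoff i j h]

/-- The crux: reversed-step sum equals forward-step sum for positive walk counts. -/
lemma C1 {m : ℕ} (hm : 0 < m) :
    ∀ k : ℕ, ∀ x : Fin (N + 1) → ℤ, P m x →
      (∑ j, ND m e k (x - e j)) = ∑ j, ND m e k (x + e j) := by
  classical
  intro k
  induction k with
  | zero =>
    intro x hx
    simp only [ND]
    exact deg hm hx 1
  | succ k IH =>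
    intro x hx
    have hL : (∑ j, ND m e (k+1) (x - e j))
        = ∑ j, ∑ i, if P m (x - e j) then ND m e k (x - e j + e i) else 0 := by
      refine Finset.sum_congr rfl fun j _ => ?_
      rw [ND]
      split_ifs with h
      · rfl
      · simp
    have hR : (∑ i, ND m e (k+1) (x + e i))
        = ∑ i, ∑ j, if P m (x + e i) then ND m e k (x + e i - e j) else 0 := by
      refine Finset.sum_congr rfl fun i _ => ?_
      rw [ND]
      split_ifs with h
      · exact (IH (x + e i) h).symm
      · simp
    rw [hL, hR]
    refine swap_sum _ _ ?_ ?_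
    · intro i j hij
      by_cases hy : P m (x - e j + e i)
      · obtain ⟨h1, h2⟩ := L2 hij hm hx hy
        rw [if_pos h1, if_pos h2]
        congr 1
        abel
      · have hy' : ¬ P m (x + e i - e j) := by
          intro h; exact hy (by convert h using 1; abel)
        rw [ND_of_not hy, ND_of_not hy']
        simp
    · have h1 : ∀ j : Fin (N+1), x - e j + e j = x := fun j => sub_add_cancel x (e j)
      have h2 : ∀ j : Fin (N+1), x + e j - e j = x := fun j => add_sub_cancel_right x (e j)
      calc (∑ j, if P m (x - e j) then ND m e k (x - e j + e j) else 0)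
          = ∑ j, if P m (x - e j) then ND m e k x else 0 := by
            refine Finset.sum_congr rfl fun j _ => ?_; rw [h1 j]
        _ = ∑ j, if P m (x + e j) then ND m e k x else 0 := deg hm hx _
        _ = ∑ j, if P m (x + e j) then ND m e k (x + e j - e j) else 0 := by
            refine Finset.sum_congr rfl fun j _ => ?_; rw [h2 j]

/-- signed steps -/
def dpm : Fin (N + 1) ⊕ Fin (N + 1) → Fin (N + 1) → ℤ := Sum.elim e fun j => -e j

lemma C2 {m : ℕ} (hm : 0 < m) :
    ∀ k : ℕ, ∀ x : Fin (N + 1) → ℤ, ND m dpm k x = 2 ^ k * ND m e k x := by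
  intro k
  induction k with
  | zero => intro x; simp [ND]
  | succ k IH =>
    intro x
    by_cases hx : P m x
    · rw [ND, ND, if_pos hx, if_pos hx, Fintype.sum_sum_type]
      have hinr : (∑ j, ND m dpm k (x + dpm (Sum.inr j))) = ∑ j, ND m dpm k (x - e j) := by
        refine Finset.sum_congr rfl fun j _ => ?_
        refine congrArg (ND m dpm k) ?_
        simp [dpm, sub_eq_add_neg]
      rw [hinr]
      have h1 : ∀ j : Fin (N+1), ND m dpm k (x + dpm (Sum.inl j)) = 2 ^ k * ND m e k (x + e j) :=
        fun j => IH _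
      have h2 : ∀ j : Fin (N+1), ND m dpm k (x - e j) = 2 ^ k * ND m e k (x - e j) :=
        fun j => IH _
      rw [Finset.sum_congr rfl fun j _ => h1 j, Finset.sum_congr rfl fun j _ => h2 j,
        ← Finset.mul_sum, ← Finset.mul_sum, C1 hm k x hx]
      ring
    · rw [ND_of_not hx, ND_of_not hx, mul_zero]

section walks

variable {J : Type} [Fintype J]

/-- type of walks of length `k` starting at `x` with steps from `d`, staying in the alcove -/
def Wk (m : ℕ) (d : J → Fin (N + 1) → ℤ) (k : ℕ) (x : Fin (N + 1) → ℤ) : Type :=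
  {w : Fin (k + 1) → Fin (N + 1) → ℤ //
    w 0 = x ∧ (∀ i, P m (w i)) ∧ ∀ i : Fin k, ∃ j, w i.succ = w i.castSucc + d j}

lemma wk_isEmpty {m k : ℕ} {d : J → Fin (N + 1) → ℤ} {x : Fin (N + 1) → ℤ}
    (hx : ¬ P m x) : IsEmpty (Wk m d k x) :=
  ⟨fun w => hx (w.2.1 ▸ w.2.2.1 0)⟩

lemma wk_subsingleton {m : ℕ} {d : J → Fin (N + 1) → ℤ} {x : Fin (N + 1) → ℤ} :
    Subsingleton (Wk m d 0 x) := by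
  constructor
  rintro ⟨w, hw, -, -⟩ ⟨w', hw', -, -⟩
  refine Subtype.ext (funext fun i => ?_)
  have hi : i = 0 := Fin.ext (by omega)
  show w i = w' i
  rw [hi, hw, hw']

def wkFun (m : ℕ) (d : J → Fin (N + 1) → ℤ) (k : ℕ) (x : Fin (N + 1) → ℤ) (hx : P m x)
    (p : Σ j : J, Wk m d k (x + d j)) : Wk m d (k + 1) x :=
  ⟨Fin.cases x p.2.1, by
      exact Fin.cases_zero,
    by
      intro i
      induction i using Fin.cases with
      | zero => simp only [Fin.cases_zero]; exact hx
      | succ t => simp only [Fin.cases_succ]; exact p.2.2.2.1 t,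
    by
      intro i
      induction i using Fin.cases with
      | zero =>
        refine ⟨p.1, ?_⟩
        show Fin.cases x p.2.1 (Fin.succ 0) = Fin.cases x p.2.1 (Fin.castSucc 0) + d p.1
        rw [Fin.castSucc_zero, Fin.cases_succ, Fin.cases_zero]
        exact p.2.2.1
      | succ t =>
        obtain ⟨j', hj'⟩ := p.2.2.2.2 t
        refine ⟨j', ?_⟩
        show Fin.cases x p.2.1 (Fin.succ t.succ) = Fin.cases x p.2.1 (Fin.castSucc t.succ) + d j'
        rw [← Fin.succ_castSucc, Fin.cases_succ, Fin.cases_succ]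
        exact hj'⟩

lemma wkFun_bijective (m : ℕ) (d : J → Fin (N + 1) → ℤ) (hd : Function.Injective d)
    (k : ℕ) (x : Fin (N + 1) → ℤ) (hx : P m x) :
    Function.Bijective (wkFun m d k x hx) := by
  constructor
  · rintro ⟨j, u⟩ ⟨j', u'⟩ h
    have hv : (Fin.cases x u.1 : Fin (k+2) → Fin (N+1) → ℤ) = Fin.cases x u'.1 :=
      congrArg Subtype.val h
    have htail : u.1 = u'.1 := by
      funext i
      have := congrFun hv i.succ
      rwa [Fin.cases_succ, Fin.cases_succ] at this
    have hjj : j = j' := by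
      apply hd
      have h1 : x + d j = u.1 0 := u.2.1.symm
      have h2 : u'.1 0 = x + d j' := u'.2.1
      have : u.1 0 = u'.1 0 := by rw [htail]
      have := h1.trans (this.trans h2)
      exact add_left_cancel this
    subst hjj
    have : u = u' := Subtype.ext htail
    rw [this]
  · intro w
    obtain ⟨j0, hj0⟩ := w.2.2.2 0
    have h1 : w.1 (Fin.succ 0) = x + d j0 := by
      rw [hj0, Fin.castSucc_zero, w.2.1]
    refine ⟨⟨j0, fun i => w.1 i.succ, h1, fun i => w.2.2.1 _, fun i => ?_⟩, ?_⟩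
    · obtain ⟨j', hj'⟩ := w.2.2.2 i.succ
      rw [← Fin.succ_castSucc] at hj'
      exact ⟨j', hj'⟩
    · refine Subtype.ext (funext fun i => ?_)
      show (Fin.cases x (fun i => w.1 i.succ) : Fin (k+2) → Fin (N+1) → ℤ) i = w.1 i
      induction i using Fin.cases with
      | zero => simp only [Fin.cases_zero]; exact w.2.1.symm
      | succ t => simp only [Fin.cases_succ]

noncomputable def wkEquiv (m : ℕ) (d : J → Fin (N + 1) → ℤ) (hd : Function.Injective d)
    (k : ℕ) (x : Fin (N + 1) → ℤ) (hx : P m x) :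
    Wk m d (k + 1) x ≃ Σ j : J, Wk m d k (x + d j) :=
  (Equiv.ofBijective _ (wkFun_bijective m d hd k x hx)).symm

lemma wk_finite (m : ℕ) (d : J → Fin (N + 1) → ℤ) (hd : Function.Injective d) :
    ∀ (k : ℕ) (x : Fin (N + 1) → ℤ), Finite (Wk m d k x) := by
  intro k
  induction k with
  | zero =>
    intro x
    have := wk_subsingleton (m := m) (d := d) (x := x)
    exact Finite.of_subsingleton
  | succ k IH =>
    intro x
    by_cases hx : P m x
    · have : ∀ j : J, Finite (Wk m d k (x + d j)) := fun j => IH _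
      exact Finite.of_equiv _ (wkEquiv m d hd k x hx).symm
    · have := wk_isEmpty (k := k + 1) (d := d) hx
      exact Finite.of_subsingleton

lemma wk_card (m : ℕ) (d : J → Fin (N + 1) → ℤ) (hd : Function.Injective d) :
    ∀ (k : ℕ) (x : Fin (N + 1) → ℤ), Nat.card (Wk m d k x) = ND m d k x := by
  classical
  intro k
  induction k with
  | zero =>
    intro x
    by_cases hx : P m x
    · rw [ND, if_pos hx]
      rw [Nat.card_eq_one_iff_unique]
      exact ⟨wk_subsingleton, ⟨⟨fun _ => x, rfl, fun _ => hx, fun i => i.elim0⟩⟩⟩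
    · have := wk_isEmpty (k := 0) (d := d) hx
      rw [Nat.card_of_isEmpty, ND, if_neg hx]
  | succ k IH =>
    intro x
    by_cases hx : P m x
    · have hfin : ∀ j : J, Finite (Wk m d k (x + d j)) := fun j => wk_finite m d hd k _
      have hft : ∀ j : J, Fintype (Wk m d k (x + d j)) := fun j => Fintype.ofFinite _
      rw [Nat.card_congr (wkEquiv m d hd k x hx)]
      rw [ND, if_pos hx]
      haveI := hft
      rw [Nat.card_eq_fintype_card, Fintype.card_sigma]
      exact Finset.sum_congr rfl fun j _ => by rw [← Nat.card_eq_fintype_card, IH]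
    · have := wk_isEmpty (k := k + 1) (d := d) hx
      rw [Nat.card_of_isEmpty, ND_of_not hx]

end walks

lemma e_injective : Function.Injective (e (N := N)) := by
  intro a b h
  by_contra hne
  have := congrFun h a
  simp [e, Pi.single_apply, hne] at this

lemma dpm_injective : Function.Injective (dpm (N := N)) := by
  rintro (a | a) (b | b) h
  · rw [e_injective h]
  · exfalso
    have := congrFun h a
    simp only [dpm, Sum.elim_inl, Sum.elim_inr, e, Pi.single_apply, Pi.neg_apply] at this
    split_ifs at this <;> omega
  · exfalso
    have := congrFun h b
    simp only [dpm, Sum.elim_inl, Sum.elim_inr, e, Pi.single_apply, Pi.neg_apply] at this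
    split_ifs at this <;> omega
  · simp only [dpm, Sum.elim_inr] at h
    rw [e_injective (neg_injective h)]

end Stmt18

/-- Lemma (gleich): the number of walks of length `k` in the alcove
`{x ∈ ℤⁿ : x_1 > x_2 > … > x_n > x_1 - m}` starting at `η` and using only positive
unit steps `+e_j` is `2^{-k}` times the number of such walks using steps `±e_j`. -/
theorem stmt_18 (n m k : ℕ) (hn : 0 < n) (hm : 0 < m) (η : Fin n → ℤ)
    (hη : (∀ i j : Fin n, i < j → η j < η i) ∧ ∀ i : Fin n, η ⟨0, hn⟩ - m < η i) :
    2 ^ k * Nat.card {w : Fin (k + 1) → Fin n → ℤ //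
        w 0 = η ∧
        (∀ i, (∀ a b : Fin n, a < b → w i b < w i a) ∧
          ∀ a : Fin n, w i ⟨0, hn⟩ - m < w i a) ∧
        ∀ i : Fin k, ∃ j : Fin n, w i.succ = w i.castSucc + Pi.single j 1} =
      Nat.card {w : Fin (k + 1) → Fin n → ℤ //
        w 0 = η ∧
        (∀ i, (∀ a b : Fin n, a < b → w i b < w i a) ∧
          ∀ a : Fin n, w i ⟨0, hn⟩ - m < w i a) ∧
        ∀ i : Fin k, ∃ j : Fin n,
          w i.succ = w i.castSucc + Pi.single j 1 ∨
          w i.succ = w i.castSucc - Pi.single j 1} := by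
  obtain ⟨N, rfl⟩ : ∃ N, n = N + 1 := ⟨n - 1, by omega⟩
  have h0 : (⟨0, hn⟩ : Fin (N + 1)) = 0 := rfl
  have hcard1 : Nat.card {w : Fin (k + 1) → Fin (N+1) → ℤ //
        w 0 = η ∧
        (∀ i, (∀ a b : Fin (N+1), a < b → w i b < w i a) ∧
          ∀ a : Fin (N+1), w i ⟨0, hn⟩ - m < w i a) ∧
        ∀ i : Fin k, ∃ j : Fin (N+1), w i.succ = w i.castSucc + Pi.single j 1}
      = Nat.card (Stmt18.Wk m Stmt18.e k η) := by
    refine Nat.card_congr (Equiv.subtypeEquivRight fun w => ?_)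
    exact Iff.rfl
  have hcard2 : Nat.card {w : Fin (k + 1) → Fin (N+1) → ℤ //
        w 0 = η ∧
        (∀ i, (∀ a b : Fin (N+1), a < b → w i b < w i a) ∧
          ∀ a : Fin (N+1), w i ⟨0, hn⟩ - m < w i a) ∧
        ∀ i : Fin k, ∃ j : Fin (N+1),
          w i.succ = w i.castSucc + Pi.single j 1 ∨
          w i.succ = w i.castSucc - Pi.single j 1}
      = Nat.card (Stmt18.Wk m Stmt18.dpm k η) := by
    refine Nat.card_congr (Equiv.subtypeEquivRight fun w => ?_)
    refine and_congr_right fun _ => and_congr_right fun _ => forall_congr' fun i => ?_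
    constructor
    · rintro ⟨j, h | h⟩
      · exact ⟨Sum.inl j, h⟩
      · exact ⟨Sum.inr j, by rw [h]; simp [Stmt18.dpm, Stmt18.e, sub_eq_add_neg]⟩
    · rintro ⟨j | j, h⟩
      · exact ⟨j, Or.inl h⟩
      · exact ⟨j, Or.inr (by rw [h]; simp [Stmt18.dpm, Stmt18.e, sub_eq_add_neg])⟩
  rw [hcard1, hcard2,
    Stmt18.wk_card m Stmt18.e Stmt18.e_injective k η,
    Stmt18.wk_card m Stmt18.dpm Stmt18.dpm_injective k η,
    Stmt18.C2 hm k η]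
end
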